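/- Suppose the pairing conjecture holds in F_2^{n-1}. Then for any 2^{n-1} nonzero vectors v_1, ..., v_{2^{n-1}} in F_2^n satisfying v_{2i-1} = v_{2i} for all 1 ≤ i ≤ 2^{n-2}, there exists a partition of F_2^n into pairs (p_i, q_i) such that p_i + q_i = v_i for all i. -/

import Mathlib

/-- A partition of `F_2^n` into `2^{n-1}` pairs `(p i, q i)`: the `2^n` vectors
`p i, q i` are pairwise distinct and cover all of `F_2^n`. -/
def PairPartition (n : ℕ) (p q : Fin (2 ^ (n - 1)) → (Fin n → ZMod 2)) : Prop :=
  Function.Bijective (fun x : Fin (2 ^ (n - 1)) × Bool => if x.2 then p x.1 else q x.1)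

/-- The pairing conjecture in `F_2^m`: any `2^{m-1}` nonzero vectors summing to zero are
the pair-sums of a partition of `F_2^m` into pairs. -/
def PairingConj (m : ℕ) : Prop :=
  ∀ v : Fin (2 ^ (m - 1)) → (Fin m → ZMod 2), (∀ i, v i ≠ 0) → ∑ i, v i = 0 →
    ∃ p q : Fin (2 ^ (m - 1)) → (Fin m → ZMod 2),
      PairPartition m p q ∧ ∀ i, p i + q i = v i

/-!
Each value `w j := v (2j) = v (2j+1)` has to be the sum of two pairs. Choose a nonzero direction
`c` and coordinates `F_2^n ≅ F_2 × F_2^{n-1}` in which `c = (1, 0)`. Above a pair `{P, Q}` of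
`F_2^{n-1}` lie four points, which split into two pairs that both have sum `c`, or both have sum
any prescribed vector lying over `P + Q`. Hence a pairing of `F_2^{n-1}` whose `j`-th pair sum is
the image of `w j` lifts to the required pairing, where the pair sums indexed by `w j = c` are
arbitrary nonzero vectors. The direction `c` is chosen so that these free values can make all
the pair sums add up to zero, and the pairing conjecture in `F_2^{n-1}` finishes the proof.
-/

open Finset Function

variable {ι κ V V' W : Type*}

def Pairable [Add V] (u : ι → V) : Prop :=
  ∃ E : ι × Bool ≃ V, ∀ j, E (j, true) + E (j, false) = u j

theorem Pairable.comp_equiv [Add V] {u : ι → V} (h : Pairable u) (e : κ ≃ ι) :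
    Pairable (u ∘ e) := by
  obtain ⟨E, hE⟩ := h
  exact ⟨(e.prodCongr (Equiv.refl Bool)).trans E, fun j => hE (e j)⟩

theorem Pairable.map_addEquiv [Add V] [Add V'] {u : ι → V} (h : Pairable u) (f : V ≃+ V') :
    Pairable (f ∘ u) := by
  obtain ⟨E, hE⟩ := h
  exact ⟨E.trans f.toEquiv, fun j => by simp [← hE j]⟩

theorem pairable_iff_exists_pairPartition {n : ℕ} (v : Fin (2 ^ (n - 1)) → Fin n → ZMod 2) :
    Pairable v ↔ ∃ p q, PairPartition n p q ∧ ∀ i, p i + q i = v i := by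
  constructor
  · rintro ⟨E, hE⟩
    refine ⟨fun i => E (i, true), fun i => E (i, false), ?_, hE⟩
    have hE' : (fun x : Fin (2 ^ (n - 1)) × Bool => if x.2 then E (x.1, true) else E (x.1, false))
        = E := by
      funext ⟨i, b⟩
      cases b <;> rfl
    unfold PairPartition
    rw [hE']
    exact E.bijective
  · rintro ⟨p, q, hpq, h⟩
    exact ⟨Equiv.ofBijective _ hpq, h⟩

theorem PairingConj.pairable {m : ℕ} (h : PairingConj m)
    (v : Fin (2 ^ (m - 1)) → Fin m → ZMod 2) (hv : ∀ i, v i ≠ 0) (hsum : ∑ i, v i = 0) :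
    Pairable v :=
  (pairable_iff_exists_pairPartition v).2 (h v hv hsum)

theorem Pairable.of_paired [Add V] {N : ℕ} {v : Fin (N * 2) → V}
    (hpair : ∀ (j : ℕ) (h : 2 * j + 1 < N * 2),
      v ⟨2 * j, (Nat.lt_succ_self _).trans h⟩ = v ⟨2 * j + 1, h⟩)
    (h : Pairable fun x : Fin N × Bool => v (finProdFinEquiv (x.1, 0))) : Pairable v := by
  convert h.comp_equiv (finProdFinEquiv.symm.trans ((Equiv.refl _).prodCongr finTwoEquiv)) using 1
  funext i
  obtain ⟨⟨j, b⟩, rfl⟩ := finProdFinEquiv.surjective i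
  simp only [comp_apply, Equiv.trans_apply, Equiv.symm_apply_apply, Equiv.prodCongr_apply,
    Prod.map, Equiv.refl_apply]
  fin_cases b
  · rfl
  · convert (hpair j (by omega)).symm using 2 <;> simp [finProdFinEquiv, add_comm]

/-- `g j` re-pairs the four points `(a, E (j, β))` lying above the `j`-th pair of `E`. -/
def liftPairingEquiv (E : ι × Bool ≃ W) (g : ι → Bool × Bool ≃ ZMod 2 × Bool) :
    (ι × Bool) × Bool ≃ ZMod 2 × W where
  toFun x := ((g x.1.1 (x.1.2, x.2)).1, E (x.1.1, (g x.1.1 (x.1.2, x.2)).2))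
  invFun y :=
    let j := (E.symm y.2).1
    let bs := (g j).symm (y.1, (E.symm y.2).2)
    ((j, bs.1), bs.2)
  left_inv x := by simp
  right_inv y := by simp

/- Above a pair `{P, Q}`, `verticalPairs` forms the pairs `{(0, P), (1, P)}`, `{(0, Q), (1, Q)}`,
both with sum `(1, 0)`, and `horizontalPairs e` forms `{(0, P), (e, Q)}`, `{(1, P), (1 + e, Q)}`,
both with sum `(e, P + Q)`. -/

noncomputable def verticalPairs : Bool × Bool ≃ ZMod 2 × Bool :=
  Equiv.ofBijective (fun x => (if x.2 then 1 else 0, x.1)) (by decide)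

noncomputable def horizontalPairs (e : ZMod 2) : Bool × Bool ≃ ZMod 2 × Bool :=
  Equiv.ofBijective (fun x => ((if x.1 then 1 else 0) + (if x.2 then 0 else e), x.2))
    (by revert e; decide)

theorem Pairable.lift [AddCommGroup W] [Module (ZMod 2) W] {t : ι → W} (ht : Pairable t)
    (u : ι → ZMod 2 × W) (hu : ∀ j, u j = (1, 0) ∨ (u j).2 = t j) :
    Pairable fun x : ι × Bool => u x.1 := by
  classical
  obtain ⟨E, hE⟩ := ht
  let g j := if u j = (1, 0) then verticalPairs else horizontalPairs (u j).1
  refine ⟨liftPairingEquiv E g, fun ⟨j, b⟩ => ?_⟩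
  by_cases h : u j = (1, 0)
  · simp [liftPairingEquiv, g, h, verticalPairs, ZModModule.add_self]
  · have ht : (u j).2 = t j := (hu j).resolve_left h
    simp [liftPairingEquiv, g, h, horizontalPairs, hE, ← ht, ← add_assoc, ZModModule.add_self]

theorem exists_linearEquiv_apply_eq_one_zero {K : Type*} [Field K] {m : ℕ} (c : Fin (m + 1) → K)
    (hc : c ≠ 0) : ∃ e : (Fin (m + 1) → K) ≃ₗ[K] K × (Fin m → K), e c = (1, 0) := by
  obtain ⟨k, hk⟩ : ∃ k, c k ≠ 0 := Function.ne_iff.1 hc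
  let σ := LinearEquiv.funCongrLeft K K (Equiv.swap 0 k)
  have hσ : σ c 0 = c k := by simp [σ, LinearEquiv.funCongrLeft_apply]
  let τ := LinearEquiv.transvection (f := LinearMap.proj 0)
    (v := Pi.single 0 1 - (c k)⁻¹ • σ c) (by simp [hσ, hk])
  have hτ : τ (σ c) = Fin.cons (c k) 0 := by
    simp only [τ, LinearEquiv.transvection.apply, LinearMap.proj_apply, hσ, smul_sub, smul_smul,
      mul_inv_cancel₀ hk, one_smul, add_sub_cancel]
    ext i
    cases i using Fin.cases <;> simp [Fin.succ_ne_zero]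
  refine ⟨σ.trans (τ.trans ((Fin.consLinearEquiv K fun _ => K).symm.trans
    (LinearEquiv.smulOfNeZero K _ (c k)⁻¹ (inv_ne_zero hk)))), ?_⟩
  simp [hτ, hk]

theorem exists_forall_ne_zero_sum_eq [AddCommGroup W] [Fintype W]
    (hW : 2 < Fintype.card W) (S : Finset ι) (x : W) (h0 : S = ∅ → x = 0)
    (h1 : #S = 1 → x ≠ 0) :
    ∃ f : ι → W, (∀ i ∈ S, f i ≠ 0) ∧ ∑ i ∈ S, f i = x := by
  classical
  induction S using Finset.induction_on generalizing x with
  | empty => exact ⟨0, by simp, by simp [h0 rfl]⟩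
  | insert a S ha ih =>
    rcases S.eq_empty_or_nonempty with rfl | hS
    · exact ⟨fun _ => x, by simpa using h1, by simp⟩
    obtain ⟨y, -, hy⟩ := exists_mem_notMem_of_card_lt_card (s := {0, x}) (t := univ)
      (card_le_two.trans_lt (by simpa using hW))
    simp only [mem_insert, mem_singleton, not_or] at hy
    obtain ⟨f, hf, hfx⟩ := ih (x - y) (fun h => absurd h hS.ne_empty)
      (fun _ => sub_ne_zero.2 (Ne.symm hy.2))
    refine ⟨update f a y, fun i hi => ?_, ?_⟩
    · rcases eq_or_ne i a with rfl | hia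
      · simpa using hy.1
      · simpa [hia] using hf i ((mem_insert.1 hi).resolve_left hia)
    · rw [sum_insert ha, sum_update_of_notMem ha, hfx, update_self, add_sub_cancel]

section AdmissibleDirection

variable [Fintype ι] [AddCommGroup V] [DecidableEq V]

/-- The vectors `w j = c` are those whose images in `V ⧸ ⟨c⟩` may be chosen freely among the
nonzero vectors; this condition says that they can be chosen so that all images sum to zero. -/
def IsAdmissibleDirection (w : ι → V) (c : V) : Prop :=
  (({j | w j = c} : Finset ι) = ∅ → ∑ j, w j = 0 ∨ ∑ j, w j = c) ∧
    (#{j | w j = c} = 1 → ∑ j, w j ≠ 0 ∧ ∑ j, w j ≠ c)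

theorem IsAdmissibleDirection.map [AddCommGroup V'] [DecidableEq V'] {w : ι → V} {c : V}
    (h : IsAdmissibleDirection w c) (f : V ≃+ V') : IsAdmissibleDirection (f ∘ w) (f c) := by
  simpa [IsAdmissibleDirection, ← map_sum] using h

theorem exists_isAdmissibleDirection [Fintype V] (w : ι → V) (hw : ∀ j, w j ≠ 0)
    (hι : Fintype.card ι ≠ 1) (hV : Fintype.card ι + 1 < Fintype.card V) :
    ∃ c ≠ 0, IsAdmissibleDirection w c := by
  set s := ∑ j, w j
  by_cases hs : s = 0
  · have hcard : #(insert 0 (univ.image w)) < #(univ : Finset V) :=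
      calc _ ≤ #(univ.image w) + 1 := card_insert_le _ _
        _ ≤ Fintype.card ι + 1 := by gcongr; exact card_image_le
        _ < _ := by simpa using hV
    obtain ⟨c, -, hc⟩ := exists_mem_notMem_of_card_lt_card hcard
    simp only [mem_insert, mem_image, mem_univ, true_and, not_or, not_exists] at hc
    refine ⟨c, hc.1, fun _ => Or.inl hs, fun h => ?_⟩
    simp [filter_false_of_mem fun j _ => hc.2 j] at h
  by_cases hs1 : #{j | w j = s} = 1
  · obtain ⟨j, hj⟩ : ∃ j, w j ≠ s := by
      by_contra! h
      simp only [h, filter_true, card_univ] at hs1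
      exact hι hs1
    refine ⟨w j, hw j, fun h => ?_, fun _ => ⟨hs, Ne.symm hj⟩⟩
    exact absurd rfl (filter_eq_empty_iff.1 h (mem_univ j))
  · exact ⟨s, hs, fun _ => Or.inr rfl, fun h => absurd h hs1⟩

end AdmissibleDirection

theorem snd_eq_zero_iff_eq_zero_or_eq_one_zero [AddCommGroup W] (y : ZMod 2 × W) :
    y.2 = 0 ↔ y = 0 ∨ y = (1, 0) := by
  obtain ⟨a, x⟩ := y
  rcases (by decide : ∀ a : ZMod 2, a = 0 ∨ a = 1) a with rfl | rfl <;> simp [Prod.ext_iff]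

theorem IsAdmissibleDirection.exists_quotient_family [Fintype ι] [AddCommGroup W]
    [Module (ZMod 2) W] [Fintype W] [DecidableEq W] (hW : 2 < Fintype.card W)
    {u : ι → ZMod 2 × W} (hu : ∀ j, u j ≠ 0) (hadm : IsAdmissibleDirection u (1, 0)) :
    ∃ t : ι → W, (∀ j, t j ≠ 0) ∧ ∑ j, t j = 0 ∧
      ∀ j, u j = (1, 0) ∨ (u j).2 = t j := by
  classical
  set S : Finset ι := {j | u j = (1, 0)}
  have hx0 : S = ∅ → (∑ j, u j).2 = 0 := fun h =>
    (snd_eq_zero_iff_eq_zero_or_eq_one_zero _).2 (hadm.1 h)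
  have hx1 : #S = 1 → (∑ j, u j).2 ≠ 0 := fun h => by
    simpa [snd_eq_zero_iff_eq_zero_or_eq_one_zero] using hadm.2 h
  obtain ⟨f, hf, hfx⟩ := exists_forall_ne_zero_sum_eq hW S _ hx0 hx1
  refine ⟨fun j => (u j).2 + if j ∈ S then f j else 0, fun j => ?_, ?_, fun j => ?_⟩
  · by_cases hj : j ∈ S
    · have : u j = (1, 0) := by simpa [S] using hj
      simpa [hj, this] using hf j hj
    · have : u j ≠ (1, 0) := by simpa [S] using hj
      simpa [hj, snd_eq_zero_iff_eq_zero_or_eq_one_zero, this] using hu j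
  · rw [sum_add_distrib, sum_ite_mem, univ_inter, hfx, ← Prod.snd_sum, ZModModule.add_self]
  · by_cases hj : j ∈ S
    · exact Or.inl (by simpa [S] using hj)
    · exact Or.inr (by simp [hj])

theorem PairingConj.pairable_comp_fst {m : ℕ} (hconj : PairingConj (m + 2))
    (w : Fin (2 ^ (m + 1)) → Fin (m + 3) → ZMod 2) (hw : ∀ j, w j ≠ 0) :
    Pairable fun x : Fin (2 ^ (m + 1)) × Bool => w x.1 := by
  have hcard (k : ℕ) : Fintype.card (Fin k → ZMod 2) = 2 ^ k := by simp
  have hpos : 2 ≤ 2 ^ (m + 1) := Nat.le_self_pow m.succ_ne_zero 2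
  have h2 : 2 ^ (m + 2) = 2 ^ (m + 1) * 2 := pow_succ 2 (m + 1)
  have h3 : 2 ^ (m + 3) = 2 ^ (m + 1) * 4 := by ring
  obtain ⟨c, hc0, hc⟩ := exists_isAdmissibleDirection w hw (by simp)
    (by rw [Fintype.card_fin, hcard, h3]; linarith)
  obtain ⟨e, he⟩ := exists_linearEquiv_apply_eq_one_zero c hc0
  obtain ⟨t, ht0, hts, htu⟩ := (he ▸ hc.map e.toAddEquiv).exists_quotient_family
    (by rw [hcard, h2]; linarith) (u := e ∘ w) (by simpa using hw)
  simpa [comp_def] using ((hconj.pairable t ht0 hts).lift _ htu).map_addEquiv e.symm.toAddEquiv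

theorem exists_pairPartition_one (v : Fin (2 ^ (1 - 1)) → Fin 1 → ZMod 2)
    (hv : ∀ i, v i ≠ 0) :
    ∃ p q, PairPartition 1 p q ∧ ∀ i, p i + q i = v i := by
  unfold PairPartition
  revert v
  decide

theorem exists_pairPartition_two (c : Fin 2 → ZMod 2) (hc : c ≠ 0) :
    ∃ p q, PairPartition 2 p q ∧ ∀ i, p i + q i = c := by
  unfold PairPartition
  revert c
  decide

/-- If the pairing conjecture holds in `F_2^{n-1}`, then any `2^{n-1}` nonzero vectors in
`F_2^n` with `v_{2i-1} = v_{2i}` for all `i` are realized as the pair-sums of a partition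
of `F_2^n` into pairs. -/
theorem pairing_of_paired_values (n : ℕ) (hconj : PairingConj (n - 1))
    (v : Fin (2 ^ (n - 1)) → (Fin n → ZMod 2))
    (hnz : ∀ i, v i ≠ 0)
    (hpair : ∀ (j : ℕ) (h : 2 * j + 1 < 2 ^ (n - 1)),
      v ⟨2 * j, lt_trans (Nat.lt_succ_self _) h⟩ = v ⟨2 * j + 1, h⟩) :
    ∃ p q : Fin (2 ^ (n - 1)) → (Fin n → ZMod 2),
      PairPartition n p q ∧ ∀ i, p i + q i = v i := by
  rcases n with _ | _ | _ | m
  · exact absurd (Subsingleton.elim _ _) (hnz 0)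
  · exact exists_pairPartition_one v hnz
  · have hv : ∀ i, v i = v 0 := by
      intro i
      fin_cases i
      · rfl
      · exact (hpair 0 (by decide)).symm
    simp only [hv]
    exact exists_pairPartition_two _ (hnz 0)
  · rw [← pairable_iff_exists_pairPartition]
    exact .of_paired hpair
      (hconj.pairable_comp_fst (fun j => v (finProdFinEquiv (j, 0))) fun _ => hnz _)
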